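/- arXiv:2110.08119 — 4 statements merged into one kernel-verified Lean document; each statement's English description precedes it below -/
import Mathlib

section
/- In a quaternion algebra B over ℝ, for p, q ∈ B and unit-norm invertible directions α, β with αβ̄ − βᾱ ≠ 0, the intersection point of the lines p + ℝα and q + ℝβ, when r and s from p + rα = q + sβ are real, is given by ⟦p,q⟧_{α,β} = p + [β(p̄ − q̄) − (p − q)β̄](αβ̄ − βᾱ)^{−1}α. -/
noncomputable section

open scoped Quaternion

/-- The intersection point of the line through `p` with direction `α` and the line
through `q` with direction `β`: `z` lies on both lines and is the unique such point. -/
def OrigamiInter {V : Type*} [AddCommGroup V] [Module ℝ V]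
    (p q α β z : V) : Prop :=
  (∃ r s : ℝ, z = p + r • α ∧ z = q + s • β) ∧
  ∀ z', (∃ r s : ℝ, z' = p + r • α ∧ z' = q + s • β) → z' = z

/-- Iterated origami construction with seed points `{0, e}` and direction set `U`. -/
def Mseq {V : Type*} [AddCommGroup V] [Module ℝ V] (U : Set V) (e : V) : ℕ → Set V
  | 0 => {0, e}
  | k + 1 => {z | ∃ p ∈ Mseq U e k, ∃ q ∈ Mseq U e k, ∃ α ∈ U, ∃ β ∈ U,
      OrigamiInter p q α β z}

/-- The origami set `M(U)` with seed points `{0, e}`. -/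
def MU {V : Type*} [AddCommGroup V] [Module ℝ V] (U : Set V) (e : V) : Set V :=
  ⋃ k, Mseq U e k

/-- The first standard basis vector of `ℝⁿ`, playing the role of `1`. -/
def uno (n : ℕ) : EuclideanSpace ℝ (Fin (n + 1)) := EuclideanSpace.single 0 1

instance Quaternion.instStarModuleReal : StarModule ℝ ℍ[ℝ] :=
  ⟨fun c a => by rw [Quaternion.star_smul, star_trivial c]⟩

section

variable {R : Type*} [Ring R] [StarRing R] [Algebra ℝ R] [StarModule ℝ R]

theorem mul_star_sub_mul_star_of_eq_smul_sub_smul {d α β : R} {r s : ℝ}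
    (hd : d = s • β - r • α) :
    β * star d - d * star β = r • (α * star β - β * star α) := by
  simp only [hd, star_sub, star_smul, star_trivial, mul_sub, sub_mul, mul_smul_comm,
    smul_mul_assoc]
  module

end

theorem stmt10_general (p q α β : ℍ[ℝ])
    (hne : α * star β - β * star α ≠ 0)
    (r s : ℝ) (h : p + r • α = q + s • β) :
    p + r • α =
      p + (β * (star p - star q) - (p - q) * star β) *
        (α * star β - β * star α)⁻¹ * α := by
  have hd : p - q = s • β - r • α := by linear_combination (norm := module) h
  have key : β * (star p - star q) - (p - q) * star β = r • (α * star β - β * star α) := by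
    rw [← star_sub]
    exact mul_star_sub_mul_star_of_eq_smul_sub_smul hd
  rw [key, smul_mul_assoc, mul_inv_cancel₀ hne, smul_mul_assoc, one_mul]

theorem stmt10 (p q α β : ℍ[ℝ]) (hα : ‖α‖ = 1) (hβ : ‖β‖ = 1)
    (hne : α * star β - β * star α ≠ 0)
    (r s : ℝ) (h : p + r • α = q + s • β) :
    p + r • α =
      p + (β * (star p - star q) - (p - q) * star β) *
        (α * star β - β * star α)⁻¹ * α :=
  stmt10_general p q α β hne r s h
end
end

section
/- In ℝ⁴ identified with the Hamilton quaternions, the origami set M(U) with seed points {0,1} and direction set U = {1, i, (i−1)/√2, j, (j−1)/√2, k, (k−1)/√2} equals the Lipschitz order ℤ + ℤi + ℤj + ℤk. -/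
noncomputable section

open scoped Quaternion

def qi : ℍ[ℝ] := ⟨0, 1, 0, 0⟩
def qj : ℍ[ℝ] := ⟨0, 0, 1, 0⟩
def qk : ℍ[ℝ] := ⟨0, 0, 0, 1⟩

/-!
Since a line of `M(U)` only depends on its direction up to scaling, one may replace the directions
`(u - 1)/√2` by `u - 1`, for `u = i, j, k`. For the inclusion in the Lipschitz order: any two
distinct directions of `{1, i, i - 1, j, j - 1, k, k - 1}` have a `2 × 2` minor equal to `1` in
the basis `1, i, j, k`, so by Cramer's rule two lines through lattice points with these directions
meet at a lattice point. Conversely, the directions `1, u, u - 1` form a triangle, and starting from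
two points `x, x + 1` one reaches every point of `x + ℤ + ℤu` by repeatedly intersecting lines
along the edges of the triangular lattice they span.
-/

open Submodule Module

section Origami

variable {V : Type*} [AddCommGroup V] [Module ℝ V]

def IsOrigamiClosed (U S : Set V) : Prop :=
  ∀ ⦃p⦄, p ∈ S → ∀ ⦃q⦄, q ∈ S → ∀ ⦃α⦄, α ∈ U → ∀ ⦃β⦄, β ∈ U →
    ∀ ⦃z⦄, OrigamiInter p q α β z → z ∈ S

theorem OrigamiInter.of_smul_smul {p q α β z : V} {c d : ℝ} (hc : c ≠ 0) (hd : d ≠ 0)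
    (h : OrigamiInter p q (c • α) (d • β) z) : OrigamiInter p q α β z := by
  obtain ⟨⟨r, s, hr, hs⟩, huniq⟩ := h
  refine ⟨⟨r * c, s * d, by rw [hr, smul_smul], by rw [hs, smul_smul]⟩, ?_⟩
  rintro z' ⟨r', s', hr', hs'⟩
  refine huniq z' ⟨r' / c, s' / d, ?_, ?_⟩
  · rw [hr', smul_smul, div_mul_cancel₀ r' hc]
  · rw [hs', smul_smul, div_mul_cancel₀ s' hd]

theorem origamiInter_smul_smul_iff {p q α β z : V} {c d : ℝ} (hc : c ≠ 0) (hd : d ≠ 0) :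
    OrigamiInter p q (c • α) (d • β) z ↔ OrigamiInter p q α β z := by
  refine ⟨OrigamiInter.of_smul_smul hc hd, fun h => ?_⟩
  refine OrigamiInter.of_smul_smul (inv_ne_zero hc) (inv_ne_zero hd) ?_
  rwa [smul_smul, smul_smul, inv_mul_cancel₀ hc, inv_mul_cancel₀ hd, one_smul, one_smul]

theorem OrigamiInter.of_linearIndependent {p q α β z : V} {r s : ℝ}
    (hαβ : LinearIndependent ℝ ![α, β]) (hr : z = p + r • α) (hs : z = q + s • β) :
    OrigamiInter p q α β z := by
  refine ⟨⟨r, s, hr, hs⟩, ?_⟩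
  rintro z' ⟨r', s', hr', hs'⟩
  obtain ⟨hr_eq, -⟩ := LinearIndependent.pair_iff.1 hαβ (r' - r) (s - s')
    (by linear_combination (norm := module) hs' - hr' + hr - hs)
  rw [hr', hr, sub_eq_zero.1 hr_eq]

theorem OrigamiInter.eq_zero_of_self {p q α z : V} (h : OrigamiInter p q α α z) : α = 0 := by
  obtain ⟨⟨r, s, hr, hs⟩, huniq⟩ := h
  have := huniq (z + α) ⟨r + 1, s + 1, by rw [hr]; module, by rw [hs]; module⟩
  simpa using this

theorem IsOrigamiClosed.of_smul {U U' S : Set V} (hS : IsOrigamiClosed U S)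
    (hU' : ∀ α ∈ U', ∃ c ≠ (0 : ℝ), c • α ∈ U) : IsOrigamiClosed U' S := by
  intro p hp q hq α hα β hβ z h
  obtain ⟨c, hc, hcα⟩ := hU' α hα
  obtain ⟨d, hd, hdβ⟩ := hU' β hβ
  exact hS hp hq hcα hdβ ((origamiInter_smul_smul_iff hc hd).2 h)

theorem IsOrigamiClosed.mem_of_eq_add_smul {U S : Set V} (hS : IsOrigamiClosed U S) {p q α β z : V}
    {r s : ℝ} (hp : p ∈ S) (hq : q ∈ S) (hα : α ∈ U) (hβ : β ∈ U)
    (hαβ : LinearIndependent ℝ ![α, β]) (hr : z = p + r • α) (hs : z = q + s • β) : z ∈ S :=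
  hS hp hq hα hβ (.of_linearIndependent hαβ hr hs)

section Seeds

variable {U : Set V} {e α β : V}

theorem Mseq_subset_succ (hα : α ∈ U) (hβ : β ∈ U) (hαβ : LinearIndependent ℝ ![α, β])
    (k : ℕ) : Mseq U e k ⊆ Mseq U e (k + 1) := fun x hx =>
  ⟨x, hx, x, hx, α, hα, β, hβ, .of_linearIndependent (r := 0) (s := 0) hαβ (by simp) (by simp)⟩

theorem isOrigamiClosed_MU (hα : α ∈ U) (hβ : β ∈ U) (hαβ : LinearIndependent ℝ ![α, β]) :
    IsOrigamiClosed U (MU U e) := by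
  have hmono : Monotone (Mseq U e) := monotone_nat_of_le_succ (Mseq_subset_succ hα hβ hαβ)
  intro p hp q hq γ hγ δ hδ z h
  obtain ⟨m, hm⟩ := Set.mem_iUnion.1 hp
  obtain ⟨n, hn⟩ := Set.mem_iUnion.1 hq
  exact Set.mem_iUnion.2 ⟨max m n + 1, p, hmono (le_max_left m n) hm,
    q, hmono (le_max_right m n) hn, γ, hγ, δ, hδ, h⟩

theorem zero_mem_MU : (0 : V) ∈ MU U e := Set.mem_iUnion.2 ⟨0, by simp [Mseq]⟩

theorem mem_MU_self : e ∈ MU U e := Set.mem_iUnion.2 ⟨0, by simp [Mseq]⟩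

theorem MU_subset_of_isOrigamiClosed {S : Set V} (hS : IsOrigamiClosed U S) (h0 : (0 : V) ∈ S)
    (he : e ∈ S) : MU U e ⊆ S := by
  refine Set.iUnion_subset fun k => ?_
  induction k with
  | zero => simp [Mseq, Set.insert_subset_iff, h0, he]
  | succ k ih =>
    rintro z ⟨p, hp, q, hq, α, hα, β, hβ, h⟩
    exact hS (ih hp) (ih hq) hα hβ h

end Seeds

section Triangle

variable {U S : Set V} {a b : V} (hS : IsOrigamiClosed U S) (hb : b ∈ U) (hba : b - a ∈ U)
  (hab : LinearIndependent ℝ ![a, b])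
include hS hb hba hab

theorem IsOrigamiClosed.add_mem_and_add_sub_mem {y : V} (hy : y ∈ S) (hya : y + a ∈ S) :
    y + b ∈ S ∧ y + a - b ∈ S := by
  have hind : LinearIndependent ℝ ![b, b - a] := LinearIndependent.pair_iff.2 fun s t hst => by
    obtain ⟨h₁, h₂⟩ := LinearIndependent.pair_iff.1 hab (-t) (s + t) (by rw [← hst]; module)
    exact ⟨by linarith, by linarith⟩
  exact ⟨hS.mem_of_eq_add_smul hy hya hb hba hind (r := 1) (s := 1) (by module) (by module),
    hS.mem_of_eq_add_smul hya hy hb hba hind (r := -1) (s := -1) (by module) (by module)⟩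

variable (ha : a ∈ U)
include ha

theorem IsOrigamiClosed.add_intCast_smul_mem {x : V} (hx : x ∈ S) (hxa : x + a ∈ S) (n : ℤ) :
    x + (n : ℝ) • a ∈ S := by
  have hind : LinearIndependent ℝ ![a, b - a] := LinearIndependent.pair_iff.2 fun s t hst => by
    obtain ⟨h₁, h₂⟩ := LinearIndependent.pair_iff.1 hab (s - t) t (by rw [← hst]; module)
    exact ⟨by linarith, h₂⟩
  have hind' : LinearIndependent ℝ ![b, a] := LinearIndependent.pair_symm_iff.1 hab
  have up (y : V) (hy : y ∈ S) (hya : y + a ∈ S) : y + a + a ∈ S := by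
    have hyb := (hS.add_mem_and_add_sub_mem hb hba hab hy hya).1
    have hyab : y + a + b ∈ S := hS.mem_of_eq_add_smul hya hyb hb ha hind' (r := 1) (s := 1)
      (by module) (by module)
    exact hS.mem_of_eq_add_smul hya hyab ha hba hind (r := 1) (s := -1) (by module) (by module)
  have down (y : V) (hy : y ∈ S) (hya : y + a ∈ S) : y - a ∈ S := by
    have hyab := (hS.add_mem_and_add_sub_mem hb hba hab hy hya).2
    have hyb : y - b ∈ S := hS.mem_of_eq_add_smul hy hyab hb ha hind' (r := -1) (s := -1)
      (by module) (by module)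
    exact hS.mem_of_eq_add_smul hy hyb ha hba hind (r := -1) (s := 1) (by module) (by module)
  suffices x + (n : ℝ) • a ∈ S ∧ x + (n : ℝ) • a + a ∈ S from this.1
  induction n using Int.induction_on with
  | zero => simpa using ⟨hx, hxa⟩
  | succ i ih =>
    constructor
    · convert ih.2 using 1; push_cast; module
    · convert up _ ih.1 ih.2 using 1; push_cast; module
  | pred i ih =>
    constructor
    · convert down _ ih.1 ih.2 using 1; push_cast; module
    · convert ih.1 using 1; push_cast; module

theorem IsOrigamiClosed.add_intCast_smul_add_intCast_smul_mem {x : V} (hx : x ∈ S)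
    (hxa : x + a ∈ S) (n m : ℤ) : x + (n : ℝ) • a + (m : ℝ) • b ∈ S := by
  induction m using Int.induction_on generalizing n with
  | zero => simpa using hS.add_intCast_smul_mem hb hba hab ha hx hxa n
  | succ i ih =>
    have hn1 : x + (n : ℝ) • a + (i : ℝ) • b + a ∈ S := by
      convert ih (n + 1) using 1; push_cast; module
    convert (hS.add_mem_and_add_sub_mem hb hba hab (ih n) hn1).1 using 1
    push_cast; module
  | pred i ih =>
    have hn1 : x + ((n - 1 : ℤ) : ℝ) • a + ((-i : ℤ) : ℝ) • b + a ∈ S := by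
      convert ih n using 1; push_cast; module
    convert (hS.add_mem_and_add_sub_mem hb hba hab (ih (n - 1)) hn1).2 using 1
    push_cast; module

end Triangle

end Origami

theorem Module.Basis.add_smul_mem_span_int {ι V : Type*} [AddCommGroup V] [Module ℝ V]
    (b : Basis ι ℝ V) {p q α β : V} {r s : ℝ} {i j : ι}
    (hp : p ∈ span ℤ (Set.range b)) (hq : q ∈ span ℤ (Set.range b))
    (hα : α ∈ span ℤ (Set.range b)) (hβ : β ∈ span ℤ (Set.range b))
    (hminor : b.repr α i * b.repr β j - b.repr α j * b.repr β i = 1)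
    (h : p + r • α = q + s • β) : p + r • α ∈ span ℤ (Set.range b) := by
  have hcoord (c : ι) : r * b.repr α c - s * b.repr β c = b.repr (q - p) c := by
    have := congr(b.repr $h c)
    simp only [map_add, map_smul, map_sub, Finsupp.add_apply, Finsupp.smul_apply,
      Finsupp.sub_apply, smul_eq_mul] at this ⊢
    linarith
  have hw := (b.mem_span_iff_repr_mem ℤ _).1 (sub_mem hq hp)
  have hβ' := (b.mem_span_iff_repr_mem ℤ _).1 hβ
  obtain ⟨m, hm⟩ := hw i
  obtain ⟨n, hn⟩ := hw j
  obtain ⟨βi, hβi⟩ := hβ' i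
  obtain ⟨βj, hβj⟩ := hβ' j
  simp only [algebraMap_int_eq, eq_intCast] at hm hn hβi hβj
  rw [← hβi, ← hβj] at hminor
  have hci := hcoord i
  have hcj := hcoord j
  rw [← hβi, ← hm] at hci
  rw [← hβj, ← hn] at hcj
  -- Cramer's rule in the coordinates `i, j`
  have hr : r = ((m * βj - n * βi : ℤ) : ℝ) := by
    push_cast
    linear_combination (βj : ℝ) * hci - (βi : ℝ) * hcj - r * hminor
  rw [hr, Int.cast_smul_eq_zsmul]
  exact add_mem hp (zsmul_mem hα _)

@[simp] theorem qi_re : qi.re = 0 := rfl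
@[simp] theorem qi_imI : qi.imI = 1 := rfl
@[simp] theorem qi_imJ : qi.imJ = 0 := rfl
@[simp] theorem qi_imK : qi.imK = 0 := rfl
@[simp] theorem qj_re : qj.re = 0 := rfl
@[simp] theorem qj_imI : qj.imI = 0 := rfl
@[simp] theorem qj_imJ : qj.imJ = 1 := rfl
@[simp] theorem qj_imK : qj.imK = 0 := rfl
@[simp] theorem qk_re : qk.re = 0 := rfl
@[simp] theorem qk_imI : qk.imI = 0 := rfl
@[simp] theorem qk_imJ : qk.imJ = 0 := rfl
@[simp] theorem qk_imK : qk.imK = 1 := rfl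

abbrev lipschitzBasis : Basis (Fin 4) ℝ ℍ[ℝ] := QuaternionAlgebra.basisOneIJK (-1 : ℝ) 0 (-1)

def lipschitz : Submodule ℤ ℍ[ℝ] := span ℤ (Set.range lipschitzBasis)

theorem lipschitzBasis_repr (z : ℍ[ℝ]) :
    lipschitzBasis.repr z = ![z.re, z.imI, z.imJ, z.imK] :=
  QuaternionAlgebra.coe_basisOneIJK_repr _ _ _ z

theorem mem_lipschitz_iff {z : ℍ[ℝ]} : z ∈ lipschitz ↔
    ∃ a b c d : ℤ, z = (a : ℝ) • 1 + (b : ℝ) • qi + (c : ℝ) • qj + (d : ℝ) • qk := by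
  simp only [lipschitz, lipschitzBasis.mem_span_iff_repr_mem ℤ, lipschitzBasis_repr,
    Fin.forall_fin_succ, IsEmpty.forall_iff, algebraMap_int_eq, eq_intCast, Set.mem_range,
    Matrix.cons_val_zero, Matrix.cons_val_succ]
  constructor
  · rintro ⟨⟨a, ha⟩, ⟨b, hb⟩, ⟨c, hc⟩, ⟨d, hd⟩, -⟩
    refine ⟨a, b, c, d, ?_⟩
    ext <;> simp [← ha, ← hb, ← hc, ← hd]
  · rintro ⟨a, b, c, d, rfl⟩
    simp

def lipschitzDirs : Set ℍ[ℝ] := {1, qi, qi - 1, qj, qj - 1, qk, qk - 1}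

theorem lipschitzDirs_subset : lipschitzDirs ⊆ lipschitz := by
  intro α hα
  rw [SetLike.mem_coe, mem_lipschitz_iff]
  rcases hα with rfl | rfl | rfl | rfl | rfl | rfl | rfl
  · exact ⟨1, 0, 0, 0, by simp⟩
  · exact ⟨0, 1, 0, 0, by simp⟩
  · exact ⟨-1, 1, 0, 0, by push_cast; module⟩
  · exact ⟨0, 0, 1, 0, by simp⟩
  · exact ⟨-1, 0, 1, 0, by push_cast; module⟩
  · exact ⟨0, 0, 0, 1, by simp⟩
  · exact ⟨-1, 0, 0, 1, by push_cast; module⟩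

theorem zero_notMem_lipschitzDirs : (0 : ℍ[ℝ]) ∉ lipschitzDirs := by
  simp [lipschitzDirs, Quaternion.ext_iff]

theorem exists_lipschitzBasis_minor_eq_one {α β : ℍ[ℝ]} (hα : α ∈ lipschitzDirs)
    (hβ : β ∈ lipschitzDirs) (hne : α ≠ β) : ∃ i j : Fin 4,
      lipschitzBasis.repr α i * lipschitzBasis.repr β j -
        lipschitzBasis.repr α j * lipschitzBasis.repr β i = 1 := by
  simp only [lipschitzBasis_repr, Fin.exists_fin_succ, Matrix.cons_val_zero, Matrix.cons_val_succ,
    IsEmpty.exists_iff, or_false]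
  rcases hα with rfl | rfl | rfl | rfl | rfl | rfl | rfl <;>
    rcases hβ with rfl | rfl | rfl | rfl | rfl | rfl | rfl <;>
    first | exact absurd rfl hne | norm_num

theorem isOrigamiClosed_lipschitz : IsOrigamiClosed lipschitzDirs (lipschitz : Set ℍ[ℝ]) := by
  intro p hp q hq α hα β hβ z h
  obtain ⟨r, s, hr, hs⟩ := h.1
  by_cases hαβ : α = β
  · subst hαβ
    exact absurd (h.eq_zero_of_self ▸ hα) zero_notMem_lipschitzDirs
  obtain ⟨i, j, hminor⟩ := exists_lipschitzBasis_minor_eq_one hα hβ hαβ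
  rw [hr]
  exact lipschitzBasis.add_smul_mem_span_int hp hq (lipschitzDirs_subset hα)
    (lipschitzDirs_subset hβ) hminor (hr.symm.trans hs)

theorem Quaternion.linearIndependent_one_of_re_eq_zero {R : Type*} [Field R] {x : ℍ[R]}
    (hre : x.re = 0) (hx : x ≠ 0) : LinearIndependent R ![1, x] := by
  refine LinearIndependent.pair_iff.2 fun s t hst => ?_
  have hs : s = 0 := by simpa [hre] using congr(($hst).re)
  subst hs
  exact ⟨rfl, (smul_eq_zero.1 (by simpa using hst)).resolve_right hx⟩

def unitLipschitzDirs : Set ℍ[ℝ] :=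
  {1, qi, (Real.sqrt 2)⁻¹ • (qi - 1), qj, (Real.sqrt 2)⁻¹ • (qj - 1),
    qk, (Real.sqrt 2)⁻¹ • (qk - 1)}

theorem exists_smul_mem_lipschitzDirs :
    ∀ α ∈ unitLipschitzDirs, ∃ c ≠ (0 : ℝ), c • α ∈ lipschitzDirs := by
  have h2 : Real.sqrt 2 ≠ 0 := by positivity
  rintro α (rfl | rfl | rfl | rfl | rfl | rfl | rfl) <;>
    first
    | (refine ⟨1, one_ne_zero, ?_⟩; simp [lipschitzDirs]; done)
    | (refine ⟨Real.sqrt 2, h2, ?_⟩; simp [smul_smul, h2, lipschitzDirs])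

theorem exists_smul_mem_unitLipschitzDirs :
    ∀ α ∈ lipschitzDirs, ∃ c ≠ (0 : ℝ), c • α ∈ unitLipschitzDirs := by
  have h2 : (Real.sqrt 2)⁻¹ ≠ 0 := by positivity
  rintro α (rfl | rfl | rfl | rfl | rfl | rfl | rfl) <;>
    first
    | (refine ⟨1, one_ne_zero, ?_⟩; simp [unitLipschitzDirs]; done)
    | (refine ⟨(Real.sqrt 2)⁻¹, h2, ?_⟩; simp [unitLipschitzDirs])

theorem MU_unitLipschitzDirs_subset : MU unitLipschitzDirs 1 ⊆ lipschitz :=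
  MU_subset_of_isOrigamiClosed (isOrigamiClosed_lipschitz.of_smul exists_smul_mem_lipschitzDirs)
    (zero_mem _) (lipschitzDirs_subset (by simp [lipschitzDirs]))

theorem lipschitz_subset_MU_unitLipschitzDirs :
    (lipschitz : Set ℍ[ℝ]) ⊆ MU unitLipschitzDirs 1 := by
  set M := MU unitLipschitzDirs (1 : ℍ[ℝ])
  have hM : IsOrigamiClosed lipschitzDirs M :=
    (isOrigamiClosed_MU (α := 1) (β := qi) (by simp [unitLipschitzDirs])
      (by simp [unitLipschitzDirs])
      (Quaternion.linearIndependent_one_of_re_eq_zero qi_re (by simp [Quaternion.ext_iff]))).of_smul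
      exists_smul_mem_unitLipschitzDirs
  have plane {u x : ℍ[ℝ]} (hu : u = qi ∨ u = qj ∨ u = qk) (hx : x ∈ M) (hx1 : x + 1 ∈ M)
      (n m : ℤ) : x + (n : ℝ) • 1 + (m : ℝ) • u ∈ M := by
    obtain ⟨hu, hu1, hre, hu0⟩ : u ∈ lipschitzDirs ∧ u - 1 ∈ lipschitzDirs ∧ u.re = 0 ∧ u ≠ 0 := by
      rcases hu with rfl | rfl | rfl <;> simp [lipschitzDirs, Quaternion.ext_iff]
    exact hM.add_intCast_smul_add_intCast_smul_mem hu hu1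
      (Quaternion.linearIndependent_one_of_re_eq_zero hre hu0) (by simp [lipschitzDirs]) hx hx1 n m
  have hi (a b : ℤ) : (a : ℝ) • 1 + (b : ℝ) • qi ∈ M := by
    simpa using plane (x := 0) (.inl rfl) zero_mem_MU (by simpa using mem_MU_self) a b
  have hj (a b c : ℤ) : (a : ℝ) • 1 + (b : ℝ) • qi + (c : ℝ) • qj ∈ M := by
    convert plane (x := (b : ℝ) • qi) (.inr (.inl rfl)) (by simpa using hi 0 b)
      (by simpa [add_comm] using hi 1 b) a c using 1
    module
  have hk (a b c d : ℤ) : (a : ℝ) • 1 + (b : ℝ) • qi + (c : ℝ) • qj + (d : ℝ) • qk ∈ M := by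
    convert plane (x := (b : ℝ) • qi + (c : ℝ) • qj) (.inr (.inr rfl)) (by simpa using hj 0 b c)
      (by convert hj 1 b c using 1; simp; module) a d using 1
    module
  intro z hz
  obtain ⟨a, b, c, d, rfl⟩ := mem_lipschitz_iff.1 hz
  exact hk a b c d

theorem stmt13 :
    MU ({1, qi, (Real.sqrt 2)⁻¹ • (qi - 1), qj, (Real.sqrt 2)⁻¹ • (qj - 1),
        qk, (Real.sqrt 2)⁻¹ • (qk - 1)} : Set ℍ[ℝ]) 1 =
      {z : ℍ[ℝ] | ∃ a b c d : ℤ,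
        z = (a : ℝ) • 1 + (b : ℝ) • qi + (c : ℝ) • qj + (d : ℝ) • qk} :=
  (MU_unitLipschitzDirs_subset.antisymm lipschitz_subset_MU_unitLipschitzDirs).trans
    (Set.ext fun _ => mem_lipschitz_iff)
end
end

section
/- Let U be a set of directions in ℝⁿ containing 1 such that M(U) is a full lattice in ℝⁿ. Then U contains at least 2n − 1 directions; moreover, U contains a subset {1, α₁, α₁′, ..., α_{n−1}, α_{n−1}′} such that for each i there exist r, s ∈ ℝ with rαᵢ − sαᵢ′ ∈ ℝ + ℝα₁ + ⋯ + ℝα_{i−1}, and {1, α₁, ..., α_{n−1}} is linearly independent. -/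
noncomputable section

open scoped Quaternion

/-!
Let `W` be a proper subspace containing `1`. Since `M(U)` contains a lattice basis, it is not
contained in `W`; at the first stage where a point `z ∉ W` appears, `z = p + r α = q + s β` with
`p, q ∈ W` and `α, β ∈ U`. Then `α, β ∉ W`, `r α - s β = q - p ∈ W`, and `α ≠ β` because
parallel lines have no unique intersection. Applying this greedily to
`W = span (1, α₁, …, α_{i-1})` builds the flag, and the two directions found at step `i` lie in
`W_{i+1} \ W_i`, so together with `1` they give `2n - 1` distinct elements of `U`.
-/

open Submodule Set

theorem Module.Basis.span_setOf_intCast_combination_eq_top {ι R M : Type*} [Fintype ι] [Ring R]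
    [AddCommGroup M] [Module R M] (b : Basis ι R M) :
    span R {z | ∃ c : ι → ℤ, z = ∑ i, (c i : R) • b i} = ⊤ := by
  classical
  refine eq_top_iff.2 (b.span_eq ▸ span_mono ?_)
  rintro _ ⟨i, rfl⟩
  exact ⟨Pi.single i 1, by simp [Pi.single_apply]⟩

theorem uno_ne_zero (n : ℕ) : uno n ≠ 0 := by
  simp [uno]

section Origami

variable {V : Type*} [AddCommGroup V] [Module ℝ V]

/-- Two directions of `U` along which lines through points of `W` can meet outside `W`. -/
structure IsExitPair (U : Set V) (W : Submodule ℝ V) (α β : V) : Prop where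
  left_mem : α ∈ U
  right_mem : β ∈ U
  ne : α ≠ β
  left_notMem : α ∉ W
  right_notMem : β ∉ W
  right_mem_sup : β ∈ W ⊔ span ℝ {α}
  exists_smul_sub_mem : ∃ r s : ℝ, r • α - s • β ∈ W

theorem OrigamiInter.isExitPair {U : Set V} {W : Submodule ℝ V} {p q α β z : V}
    (h : OrigamiInter p q α β z) (hp : p ∈ W) (hq : q ∈ W) (hα : α ∈ U) (hβ : β ∈ U)
    (hz : z ∉ W) : IsExitPair U W α β := by
  obtain ⟨⟨r, s, hzp, hzq⟩, huniq⟩ := h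
  have hαW : α ∉ W := fun h => hz (hzp ▸ W.add_mem hp (W.smul_mem r h))
  have hs : s ≠ 0 := by
    rintro rfl
    exact hz (by simpa [hzq] using hq)
  have hsβ : s • β = (p - q) + r • α := by rw [sub_add_eq_add_sub, ← hzp, hzq]; abel
  refine ⟨hα, hβ, ?_, hαW, fun h => hz (hzq ▸ W.add_mem hq (W.smul_mem s h)), ?_,
    r, s, ?_⟩
  · rintro rfl
    have : z + α = z := huniq _ ⟨r + 1, s + 1, by rw [hzp, add_smul, one_smul, add_assoc],
      by rw [hzq, add_smul, one_smul, add_assoc]⟩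
    exact hαW (add_eq_left.1 this ▸ W.zero_mem)
  · rw [← inv_smul_smul₀ hs β, hsβ]
    exact smul_mem _ _ (mem_sup.2 ⟨p - q, W.sub_mem hp hq, r • α,
      smul_mem _ _ (mem_span_singleton_self α), rfl⟩)
  · rw [hsβ]
    simpa using W.sub_mem hq hp

theorem MU_subset_of_forall_not_isExitPair {U : Set V} {e : V} {W : Submodule ℝ V}
    (he : e ∈ W) (h : ∀ α β, ¬ IsExitPair U W α β) : MU U e ⊆ W := by
  refine iUnion_subset fun k => ?_
  induction k with
  | zero => exact insert_subset_iff.2 ⟨W.zero_mem, singleton_subset_iff.2 he⟩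
  | succ k ih =>
    rintro z ⟨p, hp, q, hq, α, hα, β, hβ, hz⟩
    by_contra hzW
    exact h α β (hz.isExitPair (ih hp) (ih hq) hα hβ hzW)

theorem exists_isExitPair {U : Set V} {e : V} {W : Submodule ℝ V} (he : e ∈ W) (hW : W ≠ ⊤)
    (hspan : span ℝ (MU U e) = ⊤) : ∃ α β, IsExitPair U W α β := by
  by_contra! h
  exact hW (eq_top_iff.2 (hspan ▸ span_le.2 (MU_subset_of_forall_not_isExitPair he h)))

end Origami

section Flag

variable {V : Type*} [AddCommGroup V] [Module ℝ V] (e : V) (v : ℕ → V)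

def flagSpan (k : ℕ) : Submodule ℝ V :=
  span ℝ (insert e (v '' Iio k))

theorem self_mem_flagSpan (k : ℕ) : e ∈ flagSpan e v k :=
  subset_span (mem_insert e _)

theorem apply_mem_flagSpan {j k : ℕ} (h : j < k) : v j ∈ flagSpan e v k :=
  subset_span (mem_insert_of_mem e (mem_image_of_mem v h))

theorem flagSpan_mono : Monotone (flagSpan e v) := fun _ _ h =>
  span_mono (insert_subset_insert (image_mono (Iio_subset_Iio h)))

theorem flagSpan_zero : flagSpan e v 0 = span ℝ {e} := by
  simp [flagSpan]

theorem flagSpan_succ (k : ℕ) : flagSpan e v (k + 1) = flagSpan e v k ⊔ span ℝ {v k} := by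
  rw [flagSpan, flagSpan, ← span_union, ← Order.succ_eq_add_one, Order.Iio_succ_eq_insert,
    image_insert_eq, insert_comm, ← union_singleton]

theorem flagSpan_eq_span_range (k : ℕ) :
    flagSpan e v k = span ℝ (range (Fin.cons e (fun i : Fin k => v i) : Fin (k + 1) → V)) := by
  rw [flagSpan, Fin.range_cons, ← Fin.range_val, ← range_comp]
  rfl

theorem flagSpan_val_eq {n : ℕ} (i : Fin n) :
    flagSpan e v i = span ℝ ({e} ∪ {x | ∃ j : Fin n, j < i ∧ x = v j}) := by
  rw [flagSpan, insert_eq]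
  congr 2
  ext x
  constructor
  · rintro ⟨j, hj, rfl⟩
    exact ⟨⟨j, hj.trans i.isLt⟩, hj, rfl⟩
  · rintro ⟨j, hj, rfl⟩
    exact ⟨j, hj, rfl⟩

theorem flagSpan_ne_top [FiniteDimensional ℝ V] {k : ℕ} (hk : k + 1 < Module.finrank ℝ V) :
    flagSpan e v k ≠ ⊤ := by
  intro htop
  have := finrank_range_le_card (R := ℝ) (Fin.cons e (fun i : Fin k => v i) : Fin (k + 1) → V)
  rw [Set.finrank, ← flagSpan_eq_span_range, htop, finrank_top, Fintype.card_fin] at this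
  omega

theorem finrank_flagSpan [FiniteDimensional ℝ V] (he : e ≠ 0) {n : ℕ}
    (hv : ∀ k < n, v k ∉ flagSpan e v k) : Module.finrank ℝ (flagSpan e v n) = n + 1 := by
  induction n with
  | zero => rw [flagSpan_zero, finrank_span_singleton he]
  | succ n ih =>
    rw [flagSpan_succ, finrank_sup_span_singleton (hv n n.lt_add_one),
      ih fun k hk => hv k (hk.trans n.lt_add_one)]

theorem linearIndependent_finCons_of_forall_notMem_flagSpan [FiniteDimensional ℝ V] (he : e ≠ 0)
    {n : ℕ} (hv : ∀ k < n, v k ∉ flagSpan e v k) :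
    LinearIndependent ℝ (Fin.cons e (fun i : Fin n => v i) : Fin (n + 1) → V) := by
  rw [linearIndependent_iff_card_eq_finrank_span, Set.finrank, ← flagSpan_eq_span_range,
    finrank_flagSpan e v he hv, Fintype.card_fin]

theorem exists_seq_forall_flagSpan (n : ℕ) (P : Submodule ℝ V → V → V → Prop)
    (hP : ∀ (v : ℕ → V) k, k < n → ∃ α β, P (flagSpan e v k) α β) :
    ∃ v w : ℕ → V, ∀ k < n, P (flagSpan e v k) (v k) (w k) := by
  induction n with
  | zero => exact ⟨0, 0, fun k hk => absurd hk k.not_lt_zero⟩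
  | succ n ih =>
    obtain ⟨v, w, hvw⟩ := ih fun v k hk => hP v k (hk.trans n.lt_add_one)
    obtain ⟨α, β, hαβ⟩ := hP v n n.lt_add_one
    have hflag : ∀ k ≤ n, flagSpan e (Function.update v n α) k = flagSpan e v k := fun k hk => by
      have : EqOn (Function.update v n α) v (Iio k) := fun j (hj : j < k) =>
        Function.update_of_ne (by omega) α v
      rw [flagSpan, flagSpan, this.image_eq]
    refine ⟨Function.update v n α, Function.update w n β, fun k hk => ?_⟩
    rw [hflag k (by omega)]
    rcases Nat.lt_add_one_iff_lt_or_eq.1 hk with hk | rfl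
    · simpa [Function.update_of_ne hk.ne] using hvw k hk
    · simpa using hαβ

end Flag

section ExitDirections

variable {V : Type*} [DecidableEq V] {e : V} {v w : ℕ → V}

variable (e v w) in
def exitDirections (m : ℕ) : Finset V :=
  insert e ((Finset.range m).image v ∪ (Finset.range m).image w)

variable (e v w) in
theorem exitDirections_succ (m : ℕ) :
    exitDirections e v w (m + 1) = insert (v m) (insert (w m) (exitDirections e v w m)) := by
  ext x
  simp only [exitDirections, Finset.range_add_one, Finset.image_insert, Finset.mem_insert,
    Finset.mem_union]
  tauto

variable (e v w) in
theorem coe_exitDirections (m : ℕ) :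
    (exitDirections e v w m : Set V) = insert e (v '' Iio m ∪ w '' Iio m) := by
  simp only [exitDirections, Finset.coe_insert, Finset.coe_union, Finset.coe_image,
    Finset.coe_range]

variable [AddCommGroup V] [Module ℝ V] {U : Set V}

theorem coe_exitDirections_subset_flagSpan {m : ℕ}
    (hvw : ∀ k < m, IsExitPair U (flagSpan e v k) (v k) (w k)) :
    (exitDirections e v w m : Set V) ⊆ flagSpan e v m := by
  rw [coe_exitDirections]
  rintro x (rfl | ⟨j, hj, rfl⟩ | ⟨j, hj, rfl⟩)
  · exact self_mem_flagSpan _ v m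
  · exact apply_mem_flagSpan e v hj
  · refine flagSpan_mono e v (Nat.succ_le_of_lt hj) ?_
    rw [flagSpan_succ]
    exact (hvw j hj).right_mem_sup

theorem card_exitDirections {m : ℕ}
    (hvw : ∀ k < m, IsExitPair U (flagSpan e v k) (v k) (w k)) :
    (exitDirections e v w m).card = 2 * m + 1 := by
  induction m with
  | zero => rfl
  | succ m ih =>
    have hvw' : ∀ k < m, IsExitPair U (flagSpan e v k) (v k) (w k) :=
      fun k hk => hvw k (hk.trans m.lt_add_one)
    have hsub := coe_exitDirections_subset_flagSpan hvw'
    have hm := hvw m m.lt_add_one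
    rw [exitDirections_succ, Finset.card_insert_of_notMem, Finset.card_insert_of_notMem, ih hvw']
    · omega
    · exact fun h => hm.right_notMem (hsub h)
    · rw [Finset.mem_insert]
      exact not_or_intro hm.ne fun h => hm.left_notMem (hsub h)

theorem coe_exitDirections_subset (he : e ∈ U) {m : ℕ}
    (hvw : ∀ k < m, IsExitPair U (flagSpan e v k) (v k) (w k)) :
    (exitDirections e v w m : Set V) ⊆ U := by
  rw [coe_exitDirections]
  rintro x (rfl | ⟨j, hj, rfl⟩ | ⟨j, hj, rfl⟩)
  · exact he
  · exact (hvw j hj).left_mem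
  · exact (hvw j hj).right_mem

end ExitDirections

theorem stmt15 (n : ℕ) (U : Set (EuclideanSpace ℝ (Fin (n + 1))))
    (hone : uno n ∈ U)
    (b : Module.Basis (Fin (n + 1)) ℝ (EuclideanSpace ℝ (Fin (n + 1))))
    (hlat : MU U (uno n) =
      {z | ∃ c : Fin (n + 1) → ℤ, z = ∑ i, (c i : ℝ) • b i}) :
    (U.Finite → 2 * (n + 1) - 1 ≤ U.ncard) ∧
    ∃ α α' : Fin n → EuclideanSpace ℝ (Fin (n + 1)),
      (∀ i, α i ∈ U) ∧ (∀ i, α' i ∈ U) ∧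
      LinearIndependent ℝ (Fin.cons (uno n) α : Fin (n + 1) → EuclideanSpace ℝ (Fin (n + 1))) ∧
      (∀ i, ∃ r s : ℝ, r • α i - s • α' i ∈
        Submodule.span ℝ ({uno n} ∪ {x | ∃ j, j < i ∧ x = α j})) := by
  classical
  have hspan : span ℝ (MU U (uno n)) = ⊤ := hlat ▸ b.span_setOf_intCast_combination_eq_top
  obtain ⟨v, w, hvw⟩ := exists_seq_forall_flagSpan (uno n) n (IsExitPair U) fun v k hk =>
    exists_isExitPair (self_mem_flagSpan _ v k)
      (flagSpan_ne_top _ v (by rw [finrank_euclideanSpace_fin]; omega)) hspan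
  refine ⟨fun hU => ?_, fun i => v i, fun i => w i, fun i => (hvw i i.isLt).left_mem,
    fun i => (hvw i i.isLt).right_mem,
    linearIndependent_finCons_of_forall_notMem_flagSpan _ v (uno_ne_zero n)
      fun k hk => (hvw k hk).left_notMem, fun i => ?_⟩
  · calc 2 * (n + 1) - 1 = (exitDirections (uno n) v w n : Set _).ncard := by
          rw [ncard_coe_finset, card_exitDirections hvw]; omega
      _ ≤ U.ncard := ncard_le_ncard (coe_exitDirections_subset hone hvw) hU
  · rw [← flagSpan_val_eq]
    exact (hvw i i.isLt).exists_smul_sub_mem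
end
end

section
/- Let Λ = ℤ + ℤτ₁ + ⋯ + ℤτ_{n−1} be a full lattice in ℝⁿ containing the seed points, and suppose p, q ∈ Λ and α, β ∈ U = {1, α₁, α₁′, ..., α_{n−1}, α_{n−1}′} with αᵢ = τᵢ/‖τᵢ‖, αᵢ′ = (τᵢ−1)/‖τᵢ−1‖ and {1, τ₁, ..., τ_{n−1}} an ℝ-basis of ℝⁿ. Then whenever the intersection ⟦p,q⟧_{α,β} is defined, it lies in Λ (Λ is closed under the intersection operator with directions from U). -/
noncomputable section

open scoped Quaternion

/-! The directions in `U` are nonzero multiples of the lattice vectors `1, τᵢ, τᵢ - 1`.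
Two multiples of the same vector give parallel lines, which never meet in a single point.
For two different such vectors `u, v` there is a functional `φ` taking integer values on `Λ`
(a coordinate in the basis `1, τ₁, …`, its negative, or a sum of two coordinates) with
`φ u = 1` and `φ v = 0`. Applying `φ` to `p + r • α = q + s • β` shows that the intersection
is `p + φ (q - p) • u`, an integer combination of lattice vectors. -/

open Submodule Set

section Origami

variable {V : Type*} [AddCommGroup V] [Module ℝ V] {p q β z w : V}

theorem OrigamiInter.eq_add_smul {c : ℝ} (hz : OrigamiInter p q (c • w) β z)
    {φ : V →ₗ[ℝ] ℝ} (hφw : φ w = 1) (hφβ : φ β = 0) : z = p + φ (q - p) • w := by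
  obtain ⟨⟨r, s, hzp, hzq⟩, -⟩ := hz
  have hqp : q - p = (r * c) • w - s • β := by
    rw [eq_sub_of_add_eq hzp.symm, eq_sub_of_add_eq hzq.symm]; module
  rw [hzp, hqp, map_sub, map_smul, map_smul, hφw, hφβ]
  module

theorem OrigamiInter.mem_of_int_functional {L : Submodule ℤ V} {c : ℝ}
    (hz : OrigamiInter p q (c • w) β z) (hp : p ∈ L) (hq : q ∈ L) (hw : w ∈ L)
    {φ : V →ₗ[ℝ] ℝ} (hφL : ∀ x ∈ L, ∃ k : ℤ, φ x = k) (hφw : φ w = 1) (hφβ : φ β = 0) :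
    z ∈ L := by
  obtain ⟨k, hk⟩ := hφL _ (L.sub_mem hq hp)
  rw [hz.eq_add_smul hφw hφβ, hk, Int.cast_smul_eq_zsmul]
  exact L.add_mem hp (L.smul_mem k hw)

theorem not_origamiInter_smul_smul {c d : ℝ} (hc : c ≠ 0) (hd : d ≠ 0) (hw : w ≠ 0) :
    ¬ OrigamiInter p q (c • w) (d • w) z := by
  rintro ⟨⟨r, s, hzp, hzq⟩, huniq⟩
  refine hw (add_eq_left.mp (huniq (z + w) ⟨r + c⁻¹, s + d⁻¹, ?_, ?_⟩))
  · rw [hzp, add_smul, inv_smul_smul₀ hc, add_assoc]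
  · rw [hzq, add_smul, inv_smul_smul₀ hd, add_assoc]

end Origami

section BasisDirections

variable {V : Type*} [AddCommGroup V] [Module ℝ V] {ι : Type*}

theorem Module.Basis.exists_int_eq_constr_of_mem_span (b : Module.Basis ι ℝ V) (f : ι → ℤ)
    {x : V} (hx : x ∈ span ℤ (range b)) : ∃ k : ℤ, b.constr ℝ (fun j => (f j : ℝ)) x = k := by
  induction hx using Submodule.span_induction with
  | mem x hx => obtain ⟨j, rfl⟩ := hx; exact ⟨f j, by simp⟩
  | zero => exact ⟨0, by simp⟩
  | add x y _ _ hx hy =>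
    obtain ⟨k, hk⟩ := hx; obtain ⟨l, hl⟩ := hy; exact ⟨k + l, by simp [hk, hl]⟩
  | smul a x _ hx => obtain ⟨k, hk⟩ := hx; exact ⟨a * k, by simp [hk]⟩

/-- For `b = (1, τ₁, …)` and `o = 0` these are the vectors `1, τᵢ, τᵢ - 1` normalised in `U`. -/
def basisDirections (b : Module.Basis ι ℝ V) (o : ι) : Set V :=
  range b ∪ (fun i => b i - b o) '' {o}ᶜ

variable (b : Module.Basis ι ℝ V) (o : ι)

theorem ne_zero_of_mem_basisDirections {u : V} (hu : u ∈ basisDirections b o) : u ≠ 0 := by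
  obtain ⟨i, rfl⟩ | ⟨i, hio, rfl⟩ := hu
  · exact b.ne_zero i
  · exact sub_ne_zero.mpr (b.injective.ne hio)

theorem basisDirections_subset_span : basisDirections b o ⊆ span ℤ (range b) := by
  rintro _ (hu | ⟨i, -, rfl⟩)
  · exact subset_span hu
  · exact sub_mem (subset_span (mem_range_self i)) (subset_span (mem_range_self o))

theorem exists_int_constr_eq_one_eq_zero [DecidableEq ι] {u v : V} (hu : u ∈ basisDirections b o)
    (hv : v ∈ basisDirections b o) (huv : u ≠ v) :
    ∃ f : ι → ℤ, b.constr ℝ (fun j => (f j : ℝ)) u = 1 ∧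
      b.constr ℝ (fun j => (f j : ℝ)) v = 0 := by
  obtain ⟨i, rfl⟩ | ⟨i, hio : i ≠ o, rfl⟩ := hu <;>
    obtain ⟨j, rfl⟩ | ⟨j, hjo : j ≠ o, rfl⟩ := hv
  · exact ⟨Pi.single i 1, by simp, by simp [Pi.single_apply, (b.injective.ne_iff.mp huv).symm]⟩
  · by_cases hij : i = j
    · subst hij
      exact ⟨Pi.single o 1 + Pi.single i 1, by simp [Pi.single_apply, hjo],
        by simp [Pi.single_apply, hjo, hjo.symm]⟩
    by_cases hio : i = o
    · subst hio
      exact ⟨Pi.single i 1 + Pi.single j 1, by simp [Pi.single_apply, hij],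
        by simp [Pi.single_apply, hij, hjo]⟩
    exact ⟨Pi.single i 1, by simp, by simp [Pi.single_apply, Ne.symm hij, Ne.symm hio]⟩
  · by_cases hij : i = j
    · subst hij
      exact ⟨-Pi.single o 1, by simp [Pi.single_apply, hio], by simp [Pi.single_apply, hio]⟩
    exact ⟨Pi.single i 1, by simp [Pi.single_apply, hio.symm],
      by simp [Pi.single_apply, Ne.symm hij]⟩
  · have hij : i ≠ j := by rintro rfl; exact huv rfl
    exact ⟨Pi.single i 1, by simp [Pi.single_apply, hio.symm],
      by simp [Pi.single_apply, Ne.symm hij, Ne.symm hio]⟩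

end BasisDirections

theorem setOf_int_combination_eq_span {V : Type*} [AddCommGroup V] [Module ℝ V] {n : ℕ}
    (e : V) (τ : Fin n → V) :
    {z | ∃ (a : ℤ) (b : Fin n → ℤ), z = (a : ℝ) • e + ∑ i, (b i : ℝ) • τ i} =
      (span ℤ (range (Fin.cons e τ : Fin (n + 1) → V)) : Set V) := by
  ext z
  simp only [mem_ofPred_eq, SetLike.mem_coe, mem_span_range_iff_exists_fun, Fin.exists_fin_succ_pi,
    Fin.sum_univ_succ, Fin.cons_zero, Fin.cons_succ, Int.cast_smul_eq_zsmul, eq_comm]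

theorem exists_smul_mem_basisDirections {V : Type*} [NormedAddCommGroup V] [NormedSpace ℝ V]
    {n : ℕ} {e : V} {τ : Fin n → V} (b : Module.Basis (Fin (n + 1)) ℝ V) (hb : ⇑b = Fin.cons e τ)
    {α : V} (hα : α ∈ {e} ∪ range (fun i => ‖τ i‖⁻¹ • τ i) ∪
      range (fun i => ‖τ i - e‖⁻¹ • (τ i - e))) :
    ∃ c ≠ (0 : ℝ), ∃ u ∈ basisDirections b 0, α = c • u := by
  have hu {u : V} (hu : u ∈ basisDirections b 0) : ‖u‖⁻¹ ≠ 0 :=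
    inv_ne_zero (norm_ne_zero_iff.mpr (ne_zero_of_mem_basisDirections b 0 hu))
  rcases hα with (rfl | ⟨i, rfl⟩) | ⟨i, rfl⟩
  · exact ⟨1, one_ne_zero, α, Or.inl ⟨0, by simp [hb]⟩, (one_smul _ _).symm⟩
  · have hτ : τ i ∈ basisDirections b 0 := Or.inl ⟨i.succ, by simp [hb]⟩
    exact ⟨_, hu hτ, _, hτ, rfl⟩
  · have hτ : τ i - e ∈ basisDirections b 0 :=
      Or.inr ⟨i.succ, Fin.succ_ne_zero i, by simp [hb]⟩
    exact ⟨_, hu hτ, _, hτ, rfl⟩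

theorem stmt16 (n : ℕ) (τ : Fin n → EuclideanSpace ℝ (Fin (n + 1)))
    (hind : LinearIndependent ℝ (Fin.cons (uno n) τ : Fin (n + 1) → EuclideanSpace ℝ (Fin (n + 1))))
    (hspan : Submodule.span ℝ (Set.range (Fin.cons (uno n) τ : Fin (n + 1) → EuclideanSpace ℝ (Fin (n + 1)))) = ⊤)
    (Λ : Set (EuclideanSpace ℝ (Fin (n + 1))))
    (hΛ : Λ = {z | ∃ (a : ℤ) (b : Fin n → ℤ),
      z = (a : ℝ) • uno n + ∑ i, (b i : ℝ) • τ i})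
    (p q : EuclideanSpace ℝ (Fin (n + 1))) (hp : p ∈ Λ) (hq : q ∈ Λ)
    (α β : EuclideanSpace ℝ (Fin (n + 1)))
    (hαU : α ∈ ({uno n} ∪ (Set.range fun i => ‖τ i‖⁻¹ • τ i)
        ∪ (Set.range fun i => ‖τ i - uno n‖⁻¹ • (τ i - uno n)) : Set (EuclideanSpace ℝ (Fin (n + 1)))))
    (hβU : β ∈ ({uno n} ∪ (Set.range fun i => ‖τ i‖⁻¹ • τ i)
        ∪ (Set.range fun i => ‖τ i - uno n‖⁻¹ • (τ i - uno n)) : Set (EuclideanSpace ℝ (Fin (n + 1)))))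
    (z : EuclideanSpace ℝ (Fin (n + 1))) (hz : OrigamiInter p q α β z) :
    z ∈ Λ := by
  set b := Module.Basis.mk hind hspan.ge
  have hb : ⇑b = Fin.cons (uno n) τ := Module.Basis.coe_mk _ _
  rw [hΛ, setOf_int_combination_eq_span, ← hb] at hp hq ⊢
  obtain ⟨c, hc, u, hu, rfl⟩ := exists_smul_mem_basisDirections b hb hαU
  obtain ⟨d, hd, v, hv, rfl⟩ := exists_smul_mem_basisDirections b hb hβU
  obtain rfl | huv := eq_or_ne u v
  · exact absurd hz (not_origamiInter_smul_smul hc hd (ne_zero_of_mem_basisDirections b 0 hu))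
  obtain ⟨f, hfu, hfv⟩ := exists_int_constr_eq_one_eq_zero b 0 hu hv huv
  exact hz.mem_of_int_functional hp hq (basisDirections_subset_span b 0 hu)
    (fun _ hx => b.exists_int_eq_constr_of_mem_span f hx) hfu (by rw [map_smul, hfv, smul_zero])
end
end
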